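/- Let m be a nondegenerate local minimum of a C² function f with f(m) > 0, p a continuous density with p(m) > 0, and let A_r = {x : x + cτ²·∇f(x)/f(x) ∈ B(m,r)}. Then for sufficiently small r and τ (with cτ²·2M/f(m) < 1, M bounding the Hessian), A_r ⊆ B(m, r), i.e., every point shifted into the ball B(m,r) around the local minimum was already inside the ball. -/

import Mathlib

open Metric

private lemma inner_gradient_eq {d : ℕ} (f : EuclideanSpace ℝ (Fin d) → ℝ)
    (x v : EuclideanSpace ℝ (Fin d)) :
    @inner ℝ _ _ (gradient f x) v = fderiv ℝ f x v := by
  rw [gradient, InnerProductSpace.toDual_symm_apply]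

/-- Near a nondegenerate local minimum `m` of `f`, the mean shift moves points away
from `m`: for sufficiently small `r` and `τ`, every point (in a neighborhood of `m`)
shifted into `B(m, r)` was already inside `B(m, r)`. -/
theorem mean_shift_local_min {d : ℕ}
    (f : EuclideanSpace ℝ (Fin d) → ℝ) (p : EuclideanSpace ℝ (Fin d) → ℝ)
    (m : EuclideanSpace ℝ (Fin d))
    (hf : ContDiff ℝ 2 f) (hp : Continuous p)
    (hgrad0 : gradient f m = 0) (hfm : 0 < f m) (hpm : 0 < p m)
    (M lam c : ℝ) (hM : 0 < M) (hlam : 0 < lam) (hc : 0 < c)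
    (hHessBound : ∀ y, ‖iteratedFDeriv ℝ 2 f y‖ ≤ M)
    (hposdef : ∀ v : EuclideanSpace ℝ (Fin d),
      lam * ‖v‖ ^ 2 ≤ iteratedFDeriv ℝ 2 f m ![v, v]) :
    ∃ U ∈ nhds m, ∃ r₀ > (0 : ℝ), ∃ τ₀ > (0 : ℝ),
      ∀ r τ : ℝ, 0 < r → r < r₀ → 0 < τ → τ < τ₀ →
        c * τ ^ 2 * (2 * M) / f m < 1 →
        {x | x ∈ U ∧ x + (c * τ ^ 2 / f x) • gradient f x ∈ ball m r} ⊆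
          ball m r := by
  -- Hessian is continuous
  have hHcont : Continuous (iteratedFDeriv ℝ 2 f) :=
    hf.continuous_iteratedFDeriv le_rfl
  -- choose δ₁ so Hessian close to Hessian at m
  obtain ⟨δ₁, hδ₁pos, hδ₁⟩ : ∃ δ > 0, ∀ y ∈ ball m δ,
      ‖iteratedFDeriv ℝ 2 f y - iteratedFDeriv ℝ 2 f m‖ < lam := by
    have : ∀ᶠ y in nhds m, ‖iteratedFDeriv ℝ 2 f y - iteratedFDeriv ℝ 2 f m‖ < lam := by
      have h := (hHcont.tendsto m)
      have := h.sub_const (iteratedFDeriv ℝ 2 f m)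
      have := this.norm
      simpa using this.eventually_lt_const (by simpa using hlam)
    rcases Metric.eventually_nhds_iff_ball.1 this with ⟨δ, hδ, hb⟩
    exact ⟨δ, hδ, hb⟩
  -- choose δ₂ so f positive
  obtain ⟨δ₂, hδ₂pos, hδ₂⟩ : ∃ δ > 0, ∀ y ∈ ball m δ, 0 < f y := by
    have : ∀ᶠ y in nhds m, 0 < f y :=
      (hf.continuous.tendsto m).eventually_const_lt hfm
    rcases Metric.eventually_nhds_iff_ball.1 this with ⟨δ, hδ, hb⟩
    exact ⟨δ, hδ, hb⟩
  set δ := min δ₁ δ₂ with hδdef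
  have hδpos : 0 < δ := lt_min hδ₁pos hδ₂pos
  refine ⟨ball m δ, ball_mem_nhds m hδpos, 1, one_pos, 1, one_pos,
    fun r τ hr hrr hτ hττ _ x hx => ?_⟩
  obtain ⟨hxU, hxshift⟩ := hx
  set v := x - m with hv
  set g := gradient f x with hg
  have hfx : 0 < f x := hδ₂ x (ball_subset_ball (min_le_right _ _) hxU)
  -- key: ⟪g, v⟫ ≥ 0
  have hF1 : ContDiff ℝ 1 (fderiv ℝ f) := hf.fderiv_right (by norm_num)
  have hkey : 0 ≤ @inner ℝ _ _ g v := by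
    rw [hg, inner_gradient_eq]
    set φ : ℝ → ℝ := fun t => fderiv ℝ f (m + t • v) v with hφ
    have hφ0 : φ 0 = 0 := by
      have : fderiv ℝ f m v = 0 := by
        rw [← inner_gradient_eq, hgrad0]; simp
      simpa [hφ] using this
    have hderiv : ∀ t : ℝ, HasDerivAt φ
        (iteratedFDeriv ℝ 2 f (m + t • v) ![v, v]) t := by
      intro t
      have hγ : HasDerivAt (fun t : ℝ => m + t • v) v t := by
        simpa using ((hasDerivAt_id t).smul_const v).const_add m
      have hFd : HasFDerivAt (fderiv ℝ f) (fderiv ℝ (fderiv ℝ f) (m + t • v))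
          (m + t • v) := (hF1.differentiable one_ne_zero (m + t • v)).hasFDerivAt
      have hcomp := hFd.comp_hasDerivAt t hγ
      have happ := ((ContinuousLinearMap.apply ℝ ℝ v).hasFDerivAt).comp_hasDerivAt t hcomp
      have : HasDerivAt φ (fderiv ℝ (fderiv ℝ f) (m + t • v) v v) t := by
        exact happ
      rw [iteratedFDeriv_two_apply]
      simpa using this
    have hnn : ∀ t ∈ Set.Icc (0 : ℝ) 1,
        0 ≤ iteratedFDeriv ℝ 2 f (m + t • v) ![v, v] := by
      intro t ht
      have hmem : m + t • v ∈ ball m δ₁ := by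
        have hxd : ‖v‖ < δ := by
          have := mem_ball_iff_norm.1 hxU
          simpa [hv] using this
        rw [mem_ball_iff_norm]
        have : ‖m + t • v - m‖ = |t| * ‖v‖ := by
          simp [norm_smul, abs_of_nonneg ht.1]
        rw [this]
        calc |t| * ‖v‖ ≤ 1 * ‖v‖ := by
              apply mul_le_mul_of_nonneg_right _ (norm_nonneg _)
              rw [abs_of_nonneg ht.1]; exact ht.2
          _ = ‖v‖ := one_mul _
          _ < δ := hxd
          _ ≤ δ₁ := min_le_left _ _
      have hclose := hδ₁ _ hmem
      have hdiff : |iteratedFDeriv ℝ 2 f (m + t • v) ![v, v]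
          - iteratedFDeriv ℝ 2 f m ![v, v]| ≤ lam * (‖v‖ * ‖v‖) := by
        have := (iteratedFDeriv ℝ 2 f (m + t • v)
          - iteratedFDeriv ℝ 2 f m).le_opNorm ![v, v]
        rw [ContinuousMultilinearMap.sub_apply] at this
        have hprod : (∏ i, ‖(![v, v] : Fin 2 → _) i‖) = ‖v‖ * ‖v‖ := by
          simp [Fin.prod_univ_two]
        rw [hprod] at this
        calc |iteratedFDeriv ℝ 2 f (m + t • v) ![v, v]
              - iteratedFDeriv ℝ 2 f m ![v, v]|
            ≤ ‖iteratedFDeriv ℝ 2 f (m + t • v) - iteratedFDeriv ℝ 2 f m‖ * (‖v‖ * ‖v‖) :=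
              this
          _ ≤ lam * (‖v‖ * ‖v‖) := by
              apply mul_le_mul_of_nonneg_right hclose.le
              positivity
      have hlow := hposdef v
      have h1 : iteratedFDeriv ℝ 2 f m ![v, v]
          - iteratedFDeriv ℝ 2 f (m + t • v) ![v, v] ≤ lam * (‖v‖ * ‖v‖) := by
        have := (abs_le.1 hdiff).1; linarith
      have h2 : lam * ‖v‖ ^ 2 = lam * (‖v‖ * ‖v‖) := by ring
      linarith [hlow, h2 ▸ hlow]
    -- φ is monotone on [0,1]
    have hφcont : ContinuousOn φ (Set.Icc 0 1) :=
      fun t _ => ((hderiv t).continuousAt).continuousWithinAt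
    have hmono : MonotoneOn φ (Set.Icc 0 1) := by
      apply monotoneOn_of_deriv_nonneg (convex_Icc 0 1) hφcont
      · intro t ht
        exact ((hderiv t).differentiableAt).differentiableWithinAt
      · intro t ht
        rw [interior_Icc] at ht
        rw [(hderiv t).deriv]
        exact hnn t ⟨ht.1.le, ht.2.le⟩
    have h01 : φ 0 ≤ φ 1 := hmono ⟨le_refl 0, zero_le_one⟩ ⟨zero_le_one, le_refl 1⟩ zero_le_one
    have : φ 1 = fderiv ℝ f x v := by simp [hφ, hv]
    linarith [hφ0 ▸ h01, this ▸ h01]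
  -- now the norm computation
  set s : ℝ := c * τ ^ 2 / f x with hs
  have hsnn : 0 ≤ s := by positivity
  have hshift : x + s • g - m = v + s • g := by
    rw [hv]; abel
  have hle : ‖v‖ ≤ ‖v + s • g‖ := by
    have hsq : ‖v‖ ^ 2 ≤ ‖v + s • g‖ ^ 2 := by
      rw [← real_inner_self_eq_norm_sq, ← real_inner_self_eq_norm_sq]
      rw [real_inner_add_add_self]
      have h1 : 0 ≤ @inner ℝ _ _ v (s • g) := by
        rw [real_inner_smul_right, real_inner_comm]
        exact mul_nonneg hsnn hkey
      have h2 : 0 ≤ @inner ℝ _ _ (s • g) (s • g) := real_inner_self_nonneg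
      linarith
    nlinarith [norm_nonneg v, norm_nonneg (v + s • g), hsq]
  rw [mem_ball_iff_norm] at hxshift ⊢
  calc ‖x - m‖ = ‖v‖ := by rw [hv]
    _ ≤ ‖v + s • g‖ := hle
    _ = ‖x + s • g - m‖ := by rw [hshift]
    _ < r := hxshift
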